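/- Let μ be a mass distribution on ℝ² with connected support and let v ∈ S¹. Then there exists a pair of lines (ℓ₁, ℓ₂) in ℝ² such that each of the four open quadrants determined by ℓ₁ and ℓ₂ has measure μ(ℝ²)/4, and v bisects the angle between ℓ₁ and ℓ₂. -/

import Mathlib

/-! For a normal `u ≠ 0`, an offset `a` such that the half-plane `⟪u, x⟫ < a` carries half of
the mass exists by the intermediate value theorem. It is unique, because the open slab between two
such offsets would be a null set separating the support; uniqueness makes it depend continuously
on `u`. For the two halving lines with normals `rot (±α) v`, the difference between the masses of
two adjacent quadrants is `μ(ℝ²)/2` at `α = 0`, where the lines coincide, and `-μ(ℝ²)/2` at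
`α = π/2`, where they coincide with opposite orientations. At a zero in between, the two halving
conditions force all four quadrants to have equal mass. -/

open MeasureTheory Real
open scoped RealInnerProductSpace

noncomputable section

abbrev E2 := EuclideanSpace ℝ (Fin 2)

/-- Counterclockwise rotation of a vector of ℝ² by the angle `θ`. -/
def rot (θ : ℝ) (v : E2) : E2 :=
  (WithLp.equiv 2 (Fin 2 → ℝ)).symm
    ![Real.cos θ * v 0 - Real.sin θ * v 1, Real.sin θ * v 0 + Real.cos θ * v 1]

/-- Open half-plane on the positive (`true`) or negative (`false`) side of the oriented line
`{x | ⟪v, x⟫ = a}`. -/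
def halfPlane (v : E2) (a : ℝ) (s : Bool) : Set E2 :=
  if s then {x | a < ⟪v, x⟫} else {x | ⟪v, x⟫ < a}

/-- The support of a measure: points all of whose neighborhoods have positive measure. -/
def msupport (μ : Measure E2) : Set E2 :=
  {x | ∀ r > 0, 0 < μ (Metric.ball x r)}

open Filter Set
open scoped Topology

def NullOnLines (μ : Measure E2) : Prop :=
  ∀ v : E2, v ≠ 0 → ∀ a : ℝ, μ {x | ⟪v, x⟫ = a} = 0

lemma norm_rot (θ : ℝ) (v : E2) : ‖rot θ v‖ = ‖v‖ := by
  simp only [EuclideanSpace.norm_eq, Fin.sum_univ_two, Real.norm_eq_abs, sq_abs]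
  congr 1
  simp only [rot, WithLp.equiv_symm_apply, PiLp.toLp_apply, Matrix.cons_val_zero,
    Matrix.cons_val_one]
  nlinarith [sin_sq_add_cos_sq θ]

lemma rot_ne_zero {v : E2} (hv : v ≠ 0) (θ : ℝ) : rot θ v ≠ 0 := by
  rwa [← norm_ne_zero_iff, norm_rot, norm_ne_zero_iff]

lemma continuous_rot (v : E2) : Continuous fun θ => rot θ v := by
  refine (PiLp.continuous_toLp 2 _).comp (continuous_pi fun i => ?_)
  fin_cases i <;> simp <;> fun_prop

lemma rot_neg_pi_div_two (v : E2) : rot (-(π / 2)) v = -rot (π / 2) v := by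
  ext i
  fin_cases i <;> simp [rot]

lemma halfPlane_neg (u : E2) (a : ℝ) (s : Bool) :
    halfPlane (-u) (-a) s = halfPlane u a (!s) := by
  cases s <;> ext x <;> simp [halfPlane, inner_neg_left]

lemma halfPlane_true_inter_false (u : E2) (a : ℝ) :
    halfPlane u a true ∩ halfPlane u a false = ∅ := by
  ext x
  simp only [halfPlane, if_true, Bool.false_eq_true, if_false, mem_inter_iff, mem_ofPred_eq,
    mem_empty_iff_false, iff_false, not_and, not_lt]
  exact le_of_lt

lemma monotone_halfPlane_false (u : E2) : Monotone fun a => halfPlane u a false :=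
  fun _ _ hab _ hx => lt_of_lt_of_le hx hab

lemma iUnion_halfPlane_false (u : E2) : ⋃ a, halfPlane u a false = univ :=
  eq_univ_of_forall fun x => mem_iUnion.2 ⟨⟪u, x⟫ + 1, by simp [halfPlane]⟩

lemma iInter_halfPlane_false (u : E2) : ⋂ a, halfPlane u a false = ∅ :=
  eq_empty_of_forall_notMem fun x hx => by simpa [halfPlane] using mem_iInter.1 hx ⟪u, x⟫

lemma isOpen_halfPlane (u : E2) (a : ℝ) (s : Bool) : IsOpen (halfPlane u a s) := by
  cases s
  · exact isOpen_lt (by fun_prop) continuous_const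
  · exact isOpen_lt continuous_const (by fun_prop)

lemma measurableSet_halfPlane (u : E2) (a : ℝ) (s : Bool) : MeasurableSet (halfPlane u a s) :=
  (isOpen_halfPlane u a s).measurableSet

lemma eventually_mem_halfPlane_iff {ι : Type*} {l : Filter ι} {u : ι → E2} {a : ι → ℝ}
    {u₀ : E2} {a₀ : ℝ} (hu : Tendsto u l (𝓝 u₀)) (ha : Tendsto a l (𝓝 a₀)) {x : E2}
    (hx : ⟪u₀, x⟫ ≠ a₀) (s : Bool) :
    ∀ᶠ i in l, x ∈ halfPlane (u i) (a i) s ↔ x ∈ halfPlane u₀ a₀ s := by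
  have hux : Tendsto (fun i => ⟪u i, x⟫) l (𝓝 ⟪u₀, x⟫) := hu.inner tendsto_const_nhds
  rcases hx.lt_or_gt with h | h
  · filter_upwards [hux.eventually_lt ha h] with i hi
    cases s <;> simp [halfPlane, hi, h, hi.not_gt, h.not_gt]
  · filter_upwards [ha.eventually_lt hux h] with i hi
    cases s <;> simp [halfPlane, hi, h, hi.not_gt, h.not_gt]

lemma measure_compl_msupport (μ : Measure E2) : μ (msupport μ)ᶜ = 0 := by
  refine measure_null_of_locally_null _ fun x hx => ?_
  simp only [msupport, mem_compl_iff, mem_ofPred_eq, not_forall, not_lt, nonpos_iff_eq_zero]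
    at hx
  obtain ⟨r, hr, hball⟩ := hx
  exact ⟨_, mem_nhdsWithin_of_mem_nhds (Metric.ball_mem_nhds x hr), hball⟩

section Mass

variable {μ : Measure E2}

lemma msupport_inter_eq_empty {U : Set E2} (hU : IsOpen U) (h : μ U = 0) :
    msupport μ ∩ U = ∅ := by
  refine eq_empty_of_forall_notMem fun x ⟨hx, hxU⟩ => ?_
  obtain ⟨r, hr, hball⟩ := Metric.isOpen_iff.1 hU x hxU
  exact (hx r hr).ne' (measure_mono_null hball h)

lemma msupport_inter_nonempty {U : Set E2} (h : μ U ≠ 0) : (msupport μ ∩ U).Nonempty := by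
  by_contra hempty
  exact h (measure_mono_null (fun x hxU hx => hempty ⟨x, hx, hxU⟩) (measure_compl_msupport μ))

lemma measure_eq_zero_or_of_isPreconnected_msupport (hconn : IsPreconnected (msupport μ))
    {U V : Set E2} (hU : IsOpen U) (hV : IsOpen V) (hUV : U ∪ V = univ) (h : μ (U ∩ V) = 0) :
    μ U = 0 ∨ μ V = 0 := by
  by_contra! hne
  have := hconn U V hU hV (hUV ▸ subset_univ _) (msupport_inter_nonempty hne.1)
    (msupport_inter_nonempty hne.2)
  rw [msupport_inter_eq_empty (hU.inter hV) h] at this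
  exact not_nonempty_empty this

variable [IsFiniteMeasure μ]

lemma measureReal_inter_halfPlane_false_add_true (hμ : NullOnLines μ) {u : E2} (hu : u ≠ 0)
    (a : ℝ) (S : Set E2) :
    μ.real (S ∩ halfPlane u a false) + μ.real (S ∩ halfPlane u a true) = μ.real S := by
  have hdiff : S \ halfPlane u a false = S ∩ halfPlane u a true ∪ S ∩ {x | ⟪u, x⟫ = a} := by
    ext x
    simp only [halfPlane, if_true, Bool.false_eq_true, if_false, Set.mem_sdiff, mem_union,
      mem_inter_iff, mem_ofPred_eq, not_lt, le_iff_lt_or_eq, eq_comm (a := a)]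
    tauto
  have hline : (S ∩ {x | ⟪u, x⟫ = a} : Set E2) =ᵐ[μ] (∅ : Set E2) :=
    ae_eq_empty.2 (measure_mono_null inter_subset_right (hμ u hu a))
  rw [← measureReal_inter_add_sdiff (s := S) (measurableSet_halfPlane u a false), hdiff,
    measureReal_congr (union_ae_eq_left_of_ae_eq_empty hline)]

lemma measureReal_halfPlane_true (hμ : NullOnLines μ) {u : E2} (hu : u ≠ 0) (a : ℝ) :
    μ.real (halfPlane u a true) = μ.real univ - μ.real (halfPlane u a false) := by
  have := measureReal_inter_halfPlane_false_add_true hμ hu a univ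
  simp only [univ_inter] at this
  linarith

lemma tendsto_measureReal_halfPlane_inter (hμ : NullOnLines μ) {ι : Type*} {l : Filter ι}
    [l.IsCountablyGenerated] {u w : ι → E2} {a b : ι → ℝ} {u₀ w₀ : E2} {a₀ b₀ : ℝ}
    (hu : Tendsto u l (𝓝 u₀)) (ha : Tendsto a l (𝓝 a₀)) (hw : Tendsto w l (𝓝 w₀))
    (hb : Tendsto b l (𝓝 b₀)) (hu₀ : u₀ ≠ 0) (hw₀ : w₀ ≠ 0) (s t : Bool) :
    Tendsto (fun i => μ.real (halfPlane (u i) (a i) s ∩ halfPlane (w i) (b i) t)) l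
      (𝓝 (μ.real (halfPlane u₀ a₀ s ∩ halfPlane w₀ b₀ t))) := by
  refine (ENNReal.tendsto_toReal (measure_ne_top _ _)).comp
    (tendsto_measure_of_ae_tendsto_indicator_of_isFiniteMeasure l
      ((measurableSet_halfPlane _ _ _).inter (measurableSet_halfPlane _ _ _))
      (fun i => (measurableSet_halfPlane _ _ _).inter (measurableSet_halfPlane _ _ _)) ?_)
  filter_upwards [measure_eq_zero_iff_ae_notMem.1 (hμ u₀ hu₀ a₀),
    measure_eq_zero_iff_ae_notMem.1 (hμ w₀ hw₀ b₀)] with x hx₁ hx₂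
  filter_upwards [eventually_mem_halfPlane_iff hu ha hx₁ s,
    eventually_mem_halfPlane_iff hw hb hx₂ t] with i h₁ h₂
  rw [mem_inter_iff, mem_inter_iff, h₁, h₂]

lemma tendsto_measureReal_halfPlane (hμ : NullOnLines μ) {ι : Type*} {l : Filter ι}
    [l.IsCountablyGenerated] {u : ι → E2} {a : ι → ℝ} {u₀ : E2} {a₀ : ℝ}
    (hu : Tendsto u l (𝓝 u₀)) (ha : Tendsto a l (𝓝 a₀)) (hu₀ : u₀ ≠ 0) (s : Bool) :
    Tendsto (fun i => μ.real (halfPlane (u i) (a i) s)) l (𝓝 (μ.real (halfPlane u₀ a₀ s))) := by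
  simpa only [inter_self] using tendsto_measureReal_halfPlane_inter hμ hu ha hu ha hu₀ hu₀ s s

end Mass

section Halving

variable {μ : Measure E2} [IsFiniteMeasure μ]

def halvingOffset (μ : Measure E2) (u : E2) : ℝ :=
  Classical.epsilon fun a => μ.real (halfPlane u a false) = μ.real univ / 2

lemma exists_measureReal_halfPlane_eq_half (hμ : NullOnLines μ) {u : E2} (hu : u ≠ 0) :
    ∃ a, μ.real (halfPlane u a false) = μ.real univ / 2 := by
  rcases eq_zero_or_neZero μ with rfl | _
  · simp
  have hcont : Continuous fun a => μ.real (halfPlane u a false) :=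
    continuous_iff_continuousAt.2 fun a =>
      tendsto_measureReal_halfPlane hμ tendsto_const_nhds tendsto_id hu false
  have hbot : Tendsto (fun a => μ.real (halfPlane u a false)) atBot
      (𝓝 (μ.real (⋂ a, halfPlane u a false))) :=
    (ENNReal.tendsto_toReal (measure_ne_top _ _)).comp <| tendsto_measure_iInter_atBot
      (fun a => (measurableSet_halfPlane u a false).nullMeasurableSet) (monotone_halfPlane_false u)
      ⟨0, measure_ne_top _ _⟩
  have htop : Tendsto (fun a => μ.real (halfPlane u a false)) atTop
      (𝓝 (μ.real (⋃ a, halfPlane u a false))) :=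
    (ENNReal.tendsto_toReal (measure_ne_top _ _)).comp
      (tendsto_measure_iUnion_atTop (monotone_halfPlane_false u))
  rw [iInter_halfPlane_false, measureReal_empty] at hbot
  rw [iUnion_halfPlane_false] at htop
  have hm : 0 < μ.real univ := measureReal_univ_pos
  obtain ⟨a, ha⟩ := (hbot.eventually (ge_mem_nhds (half_pos hm))).exists
  obtain ⟨b, hb⟩ := (htop.eventually (le_mem_nhds (half_lt_self hm))).exists
  exact mem_range_of_exists_le_of_exists_ge hcont ⟨a, ha⟩ ⟨b, hb⟩

lemma measureReal_halfPlane_halvingOffset (hμ : NullOnLines μ) {u : E2} (hu : u ≠ 0) :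
    μ.real (halfPlane u (halvingOffset μ u) false) = μ.real univ / 2 :=
  Classical.epsilon_spec (exists_measureReal_halfPlane_eq_half hμ hu)

end Halving

section Uniqueness

variable {μ : Measure E2} [IsFiniteMeasure μ] [NeZero μ]

lemma eq_of_measureReal_halfPlane_eq_half (hμ : NullOnLines μ)
    (hconn : IsPreconnected (msupport μ)) {u : E2} (hu : u ≠ 0) {a b : ℝ}
    (ha : μ.real (halfPlane u a false) = μ.real univ / 2)
    (hb : μ.real (halfPlane u b false) = μ.real univ / 2) : a = b := by
  wlog hab : a ≤ b generalizing a b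
  · exact (this hb ha (le_of_not_ge hab)).symm
  refine hab.eq_or_lt.resolve_right fun hlt => ?_
  have hm : 0 < μ.real univ := measureReal_univ_pos
  have hcover : halfPlane u b false ∪ halfPlane u a true = univ := by
    refine eq_univ_of_forall fun x => ?_
    simp only [halfPlane, if_true, Bool.false_eq_true, if_false, mem_union, mem_ofPred_eq]
    exact (lt_or_ge ⟪u, x⟫ b).imp_right hlt.trans_le
  have hslab : μ.real (halfPlane u b false ∩ halfPlane u a true) = 0 := by
    have := measureReal_inter_halfPlane_false_add_true hμ hu a (halfPlane u b false)
    rw [inter_eq_right.2 (monotone_halfPlane_false u hab), ha, hb] at this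
    linarith
  rcases measure_eq_zero_or_of_isPreconnected_msupport hconn (isOpen_halfPlane u b false)
    (isOpen_halfPlane u a true) hcover ((measureReal_eq_zero_iff).1 hslab) with h | h
  · have := (measureReal_eq_zero_iff).2 h
    linarith
  · have := (measureReal_eq_zero_iff).2 h
    rw [measureReal_halfPlane_true hμ hu] at this
    linarith

lemma eq_halvingOffset (hμ : NullOnLines μ) (hconn : IsPreconnected (msupport μ)) {u : E2}
    (hu : u ≠ 0) {a : ℝ} (ha : μ.real (halfPlane u a false) = μ.real univ / 2) :
    a = halvingOffset μ u :=
  eq_of_measureReal_halfPlane_eq_half hμ hconn hu ha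
    (measureReal_halfPlane_halvingOffset hμ hu)

lemma halvingOffset_neg (hμ : NullOnLines μ) (hconn : IsPreconnected (msupport μ)) {u : E2}
    (hu : u ≠ 0) : halvingOffset μ (-u) = -halvingOffset μ u := by
  refine (eq_halvingOffset hμ hconn (neg_ne_zero.2 hu) ?_).symm
  rw [halfPlane_neg, Bool.not_false, measureReal_halfPlane_true hμ hu,
    measureReal_halfPlane_halvingOffset hμ hu]
  ring

lemma measureReal_halfPlane_lt_half_iff (hμ : NullOnLines μ)
    (hconn : IsPreconnected (msupport μ)) {u : E2} (hu : u ≠ 0) {b : ℝ} :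
    μ.real (halfPlane u b false) < μ.real univ / 2 ↔ b < halvingOffset μ u := by
  have hspec := measureReal_halfPlane_halvingOffset hμ hu
  refine ⟨fun hb => lt_of_not_ge fun hle => ?_, fun hb => ?_⟩
  · exact hb.not_ge (hspec ▸ measureReal_mono (monotone_halfPlane_false u hle))
  · exact ((measureReal_mono (monotone_halfPlane_false u hb.le)).trans_eq hspec).lt_of_ne
      fun h => hb.ne (eq_halvingOffset hμ hconn hu h)

lemma half_lt_measureReal_halfPlane_iff (hμ : NullOnLines μ)
    (hconn : IsPreconnected (msupport μ)) {u : E2} (hu : u ≠ 0) {b : ℝ} :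
    μ.real univ / 2 < μ.real (halfPlane u b false) ↔ halvingOffset μ u < b := by
  have hspec := measureReal_halfPlane_halvingOffset hμ hu
  refine ⟨fun hb => lt_of_not_ge fun hle => ?_, fun hb => ?_⟩
  · exact hb.not_ge (hspec ▸ measureReal_mono (monotone_halfPlane_false u hle))
  · exact (hspec.symm.trans_le (measureReal_mono (monotone_halfPlane_false u hb.le))).lt_of_ne
      fun h => hb.ne' (eq_halvingOffset hμ hconn hu h.symm)

lemma continuousAt_halvingOffset (hμ : NullOnLines μ) (hconn : IsPreconnected (msupport μ))
    {u : E2} (hu : u ≠ 0) : ContinuousAt (halvingOffset μ) u := by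
  have hF (b : ℝ) : Tendsto (fun w => μ.real (halfPlane w b false)) (𝓝 u)
      (𝓝 (μ.real (halfPlane u b false))) :=
    tendsto_measureReal_halfPlane hμ tendsto_id tendsto_const_nhds hu false
  refine tendsto_order.2 ⟨fun b hb => ?_, fun b hb => ?_⟩
  · filter_upwards [eventually_ne_nhds hu, (hF b).eventually_lt_const
      ((measureReal_halfPlane_lt_half_iff hμ hconn hu).2 hb)] with w hw hwb
    exact (measureReal_halfPlane_lt_half_iff hμ hconn hw).1 hwb
  · filter_upwards [eventually_ne_nhds hu, (hF b).eventually_const_lt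
      ((half_lt_measureReal_halfPlane_iff hμ hconn hu).2 hb)] with w hw hwb
    exact (half_lt_measureReal_halfPlane_iff hμ hconn hw).1 hwb

end Uniqueness

section Quadrants

variable {μ : Measure E2} [IsFiniteMeasure μ]

lemma measure_halfPlane_inter_eq_quarter (hμ : NullOnLines μ) {u₁ u₂ : E2} (hu₁ : u₁ ≠ 0)
    (hu₂ : u₂ ≠ 0) {a₁ a₂ : ℝ} (h₁ : μ.real (halfPlane u₁ a₁ false) = μ.real univ / 2)
    (h₂ : μ.real (halfPlane u₂ a₂ false) = μ.real univ / 2)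
    (hbal : μ.real (halfPlane u₁ a₁ true ∩ halfPlane u₂ a₂ true) =
      μ.real (halfPlane u₁ a₁ true ∩ halfPlane u₂ a₂ false)) (s₁ s₂ : Bool) :
    μ (halfPlane u₁ a₁ s₁ ∩ halfPlane u₂ a₂ s₂) = μ univ / 4 := by
  have hsplit₁ := measureReal_inter_halfPlane_false_add_true hμ hu₂ a₂ (halfPlane u₁ a₁ true)
  have hsplit₂ := measureReal_inter_halfPlane_false_add_true hμ hu₂ a₂ (halfPlane u₁ a₁ false)
  have hsplit₃ := measureReal_inter_halfPlane_false_add_true hμ hu₁ a₁ (halfPlane u₂ a₂ false)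
  rw [inter_comm _ (halfPlane u₁ a₁ false), inter_comm _ (halfPlane u₁ a₁ true)] at hsplit₃
  have htrue := measureReal_halfPlane_true hμ hu₁ a₁
  have hreal : μ.real (halfPlane u₁ a₁ s₁ ∩ halfPlane u₂ a₂ s₂) = μ.real univ / 4 := by
    cases s₁ <;> cases s₂ <;> linarith
  rw [← ofReal_measureReal, hreal, ENNReal.ofReal_div_of_pos four_pos, ofReal_measureReal,
    ENNReal.ofReal_ofNat]

def halvingQuadrant (μ : Measure E2) (v : E2) (α : ℝ) (s₁ s₂ : Bool) : Set E2 :=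
  halfPlane (rot α v) (halvingOffset μ (rot α v)) s₁ ∩
    halfPlane (rot (-α) v) (halvingOffset μ (rot (-α) v)) s₂

variable [NeZero μ]

lemma continuous_measureReal_halvingQuadrant (hμ : NullOnLines μ)
    (hconn : IsPreconnected (msupport μ)) {v : E2} (hv : v ≠ 0) (s₁ s₂ : Bool) :
    Continuous fun α => μ.real (halvingQuadrant μ v α s₁ s₂) := by
  have hrot : Continuous fun α => rot α v := continuous_rot v
  have hrot' : Continuous fun α => rot (-α) v := hrot.comp continuous_neg
  exact continuous_iff_continuousAt.2 fun α =>
    tendsto_measureReal_halfPlane_inter hμ hrot.continuousAt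
      ((continuousAt_halvingOffset hμ hconn (rot_ne_zero hv α)).comp
        (f := fun α => rot α v) hrot.continuousAt)
      hrot'.continuousAt
      ((continuousAt_halvingOffset hμ hconn (rot_ne_zero hv (-α))).comp
        (f := fun α => rot (-α) v) hrot'.continuousAt)
      (rot_ne_zero hv α) (rot_ne_zero hv (-α)) s₁ s₂

lemma exists_angle_measureReal_halvingQuadrant_eq (hμ : NullOnLines μ)
    (hconn : IsPreconnected (msupport μ)) {v : E2} (hv : v ≠ 0) :
    ∃ α ∈ Ioo 0 (π / 2), μ.real (halvingQuadrant μ v α true true) =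
      μ.real (halvingQuadrant μ v α true false) := by
  set g := fun α => μ.real (halvingQuadrant μ v α true true) -
    μ.real (halvingQuadrant μ v α true false)
  have hm : 0 < μ.real univ := measureReal_univ_pos
  have hhalf (α : ℝ) : μ.real (halfPlane (rot α v) (halvingOffset μ (rot α v)) true) =
      μ.real univ / 2 := by
    rw [measureReal_halfPlane_true hμ (rot_ne_zero hv α),
      measureReal_halfPlane_halvingOffset hμ (rot_ne_zero hv α)]
    ring
  have hg₀ : g 0 = μ.real univ / 2 := by
    simp only [g, halvingQuadrant, neg_zero, inter_self, halfPlane_true_inter_false,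
      measureReal_empty, hhalf, sub_zero]
  have hgπ : g (π / 2) = -(μ.real univ / 2) := by
    simp only [g, halvingQuadrant, rot_neg_pi_div_two,
      halvingOffset_neg hμ hconn (rot_ne_zero hv _), halfPlane_neg, Bool.not_true,
      Bool.not_false, inter_self, halfPlane_true_inter_false, measureReal_empty, hhalf, zero_sub]
  have hcont : Continuous g :=
    (continuous_measureReal_halvingQuadrant hμ hconn hv true true).sub
      (continuous_measureReal_halvingQuadrant hμ hconn hv true false)
  obtain ⟨α, hα, hgα⟩ := intermediate_value_Ioo' (by positivity) hcont.continuousOn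
    (show (0 : ℝ) ∈ Ioo (g (π / 2)) (g 0) by rw [hg₀, hgπ]; constructor <;> linarith)
  exact ⟨α, hα, sub_eq_zero.1 hgα⟩

end Quadrants

/-- Four-partitioning a mass distribution in the plane with a prescribed angular bisector:
for a mass distribution `μ` with connected support and a unit vector `v`, there are two lines
(with normals `v` rotated by `±α` for some angle `α ∈ (0, π/2)`, so that `v` bisects the
angle between the lines) whose four open quadrants each carry measure `μ(ℝ²)/4`. -/
theorem stmt11 (μ : Measure E2) [IsFiniteMeasure μ]
    (hlines : ∀ v : E2, v ≠ 0 → ∀ a : ℝ, μ {x | ⟪v, x⟫ = a} = 0)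
    (hconn : IsConnected (msupport μ))
    (v : E2) (hv : ‖v‖ = 1) :
    ∃ α ∈ Set.Ioo (0 : ℝ) (π / 2), ∃ a₁ a₂ : ℝ, ∀ s₁ s₂ : Bool,
      μ (halfPlane (rot α v) a₁ s₁ ∩ halfPlane (rot (-α) v) a₂ s₂) = μ Set.univ / 4 := by
  rcases eq_zero_or_neZero μ with rfl | _
  · exact ⟨π / 4, ⟨by positivity, by linarith [pi_pos]⟩, 0, 0, fun _ _ => by simp⟩
  have hv0 : v ≠ 0 := norm_ne_zero_iff.1 (hv ▸ one_ne_zero)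
  obtain ⟨α, hα, hbal⟩ :=
    exists_angle_measureReal_halvingQuadrant_eq hlines hconn.isPreconnected hv0
  exact ⟨α, hα, _, _, measure_halfPlane_inter_eq_quarter hlines (rot_ne_zero hv0 α)
    (rot_ne_zero hv0 (-α)) (measureReal_halfPlane_halvingOffset hlines (rot_ne_zero hv0 α))
    (measureReal_halfPlane_halvingOffset hlines (rot_ne_zero hv0 (-α))) hbal⟩
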